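/- Let R > 0, C > 0, μ > 0 and n ≥ 1, and let R_1, …, R_n be independent random variables each with probability density f(r) = 2r/R² on (0, R]. Then E[ ∏_{i=1}^n (C·R_i/μ)/(1 + C·R_i/μ) ] = (1 − a)^n, where a = 2μ/(R·C) − (2μ²/(R²·C²))·log(1 + R·C/μ). -/

import Mathlib

/-!
By independence the expectation factors as `E[g(R₁)]ⁿ` with `g(r) = (Cr/μ)/(1 + Cr/μ)`.
Writing `c = C/μ`, `E[g(R₁)] = (2/R²) ∫₀ᴿ r · cr/(1 + cr) dr`, and the integrand has the
elementary antiderivative `r²/2 - r/c + log(1 + cr)/c²`.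
-/

open MeasureTheory ProbabilityTheory

lemma integral_withDensity_ofReal_eq_integral_mul {α : Type*} [MeasurableSpace α]
    {μ : Measure α} {ρ : α → ℝ} (hρ : Measurable ρ) (hρ_nonneg : ∀ x, 0 ≤ ρ x) (g : α → ℝ) :
    ∫ x, g x ∂μ.withDensity (fun x ↦ ENNReal.ofReal (ρ x)) = ∫ x, ρ x * g x ∂μ := by
  rw [integral_withDensity_eq_integral_toReal_smul hρ.ennreal_ofReal
    (ae_of_all _ fun _ ↦ ENNReal.ofReal_lt_top)]
  simp only [ENNReal.toReal_ofReal (hρ_nonneg _), smul_eq_mul]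

lemma hasDerivAt_antideriv_mul_div_one_add {c r : ℝ} (hc : c ≠ 0) (hr : 1 + c * r ≠ 0) :
    HasDerivAt (fun x ↦ x ^ 2 / 2 - x / c + Real.log (1 + c * x) / c ^ 2)
      (r * (c * r / (1 + c * r))) r := by
  have hlin : HasDerivAt (fun x ↦ 1 + c * x) c r := by
    simpa using ((hasDerivAt_id r).const_mul c).const_add 1
  have := (((hasDerivAt_pow 2 r).div_const 2).sub ((hasDerivAt_id r).div_const c)).add
    ((hlin.log hr).div_const (c ^ 2))
  refine this.congr_deriv ?_
  field_simp
  ring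

lemma integral_mul_div_one_add {c R : ℝ} (hc : 0 < c) (hR : 0 ≤ R) :
    ∫ r in (0 : ℝ)..R, r * (c * r / (1 + c * r))
      = R ^ 2 / 2 - R / c + Real.log (1 + c * R) / c ^ 2 := by
  have hpos : ∀ r ∈ Set.uIcc 0 R, 0 < 1 + c * r := fun r hr ↦ by
    rw [Set.uIcc_of_le hR] at hr
    nlinarith [hr.1]
  rw [intervalIntegral.integral_eq_sub_of_hasDerivAt
    (fun r hr ↦ hasDerivAt_antideriv_mul_div_one_add hc.ne' (hpos r hr).ne')]
  · simp
  · exact ContinuousOn.intervalIntegrable <| continuousOn_id.mul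
      ((continuousOn_const.mul continuousOn_id).div (by fun_prop) fun r hr ↦ (hpos r hr).ne')

lemma integral_blocking_prob_linear_density {R C mu : ℝ} (hR : 0 < R) (hC : 0 < C)
    (hmu : 0 < mu) :
    ∫ r in (0 : ℝ)..R, 2 * r / R ^ 2 * (C * r / mu / (1 + C * r / mu))
      = 1 - (2 * mu / (R * C) - 2 * mu ^ 2 / (R ^ 2 * C ^ 2) * Real.log (1 + R * C / mu)) := by
  have hintegrand : ∀ r : ℝ, 2 * r / R ^ 2 * (C * r / mu / (1 + C * r / mu))
      = 2 / R ^ 2 * (r * (C / mu * r / (1 + C / mu * r))) := fun r ↦ by ring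
  simp only [hintegrand, intervalIntegral.integral_const_mul,
    integral_mul_div_one_add (div_pos hC hmu) hR.le]
  rw [show C / mu * R = R * C / mu by ring]
  field_simp
  ring

lemma integral_withDensity_linear_Ioc {R : ℝ} (hR : 0 ≤ R) (φ : ℝ → ℝ) :
    ∫ r, φ r ∂volume.withDensity
        (fun r ↦ ENNReal.ofReal (if r ∈ Set.Ioc 0 R then 2 * r / R ^ 2 else 0))
      = ∫ r in (0 : ℝ)..R, 2 * r / R ^ 2 * φ r := by
  have hdensity : Measurable fun r : ℝ ↦ if r ∈ Set.Ioc 0 R then 2 * r / R ^ 2 else 0 :=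
    Measurable.ite measurableSet_Ioc (by fun_prop) measurable_const
  have hdensity_nonneg (r : ℝ) : 0 ≤ if r ∈ Set.Ioc 0 R then 2 * r / R ^ 2 else 0 := by
    split_ifs with hr
    · exact div_nonneg (by linarith [hr.1]) (sq_nonneg R)
    · rfl
  have hindicator : (fun r ↦ (if r ∈ Set.Ioc 0 R then 2 * r / R ^ 2 else 0) * φ r)
      = (Set.Ioc 0 R).indicator fun r ↦ 2 * r / R ^ 2 * φ r := by
    ext r
    simp [Set.indicator_apply, ite_mul]
  rw [integral_withDensity_ofReal_eq_integral_mul hdensity hdensity_nonneg, hindicator,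
    integral_indicator measurableSet_Ioc, intervalIntegral.integral_of_le hR]

theorem expected_product_blockage_general
    {Ω : Type*} [MeasurableSpace Ω] (P : Measure Ω) [IsProbabilityMeasure P]
    (R C mu : ℝ) (hR : 0 < R) (hC : 0 < C) (hmu : 0 < mu)
    (n : ℕ)
    (X : Fin n → Ω → ℝ) (hmeas : ∀ i, Measurable (X i))
    (hindep : iIndepFun X P)
    (hdist : ∀ i, Measure.map (X i) P
      = volume.withDensity (fun r => ENNReal.ofReal (if r ∈ Set.Ioc 0 R then 2 * r / R ^ 2 else 0)))
    (a : ℝ)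
    (ha : a = 2 * mu / (R * C) - 2 * mu ^ 2 / (R ^ 2 * C ^ 2) * Real.log (1 + R * C / mu)) :
    ∫ ω, (∏ i, (C * X i ω / mu) / (1 + C * X i ω / mu)) ∂P = (1 - a) ^ n := by
  set g : ℝ → ℝ := fun r ↦ C * r / mu / (1 + C * r / mu)
  have hg : Measurable g := by fun_prop
  have hfactor (i : Fin n) : ∫ ω, g (X i ω) ∂P = 1 - a := by
    rw [← integral_map (hmeas i).aemeasurable hg.aestronglyMeasurable, hdist i,
      integral_withDensity_linear_Ioc hR.le, integral_blocking_prob_linear_density hR hC hmu, ha]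
  rw [hindep.integral_fun_prod_comp (f := fun _ ↦ g) (fun i ↦ (hmeas i).aemeasurable)
    (fun _ ↦ hg.aestronglyMeasurable)]
  simp [hfactor]

/-- For `n ≥ 1` i.i.d. link lengths `R₁, …, Rₙ` with density `2r/R²` on `(0, R]`, the
expected product of the single-link blocking probabilities `(C Rᵢ/μ)/(1 + C Rᵢ/μ)` is
`(1 - a)ⁿ`, where `a = 2μ/(RC) - (2μ²/(R²C²)) log (1 + RC/μ)`. -/
theorem expected_product_blockage
    {Ω : Type*} [MeasurableSpace Ω] (P : Measure Ω) [IsProbabilityMeasure P]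
    (R C mu : ℝ) (hR : 0 < R) (hC : 0 < C) (hmu : 0 < mu)
    (n : ℕ) (hn : 1 ≤ n)
    (X : Fin n → Ω → ℝ) (hmeas : ∀ i, Measurable (X i))
    (hindep : iIndepFun X P)
    (hdist : ∀ i, Measure.map (X i) P
      = volume.withDensity (fun r => ENNReal.ofReal (if r ∈ Set.Ioc 0 R then 2 * r / R ^ 2 else 0)))
    (a : ℝ)
    (ha : a = 2 * mu / (R * C) - 2 * mu ^ 2 / (R ^ 2 * C ^ 2) * Real.log (1 + R * C / mu)) :
    ∫ ω, (∏ i, (C * X i ω / mu) / (1 + C * X i ω / mu)) ∂P = (1 - a) ^ n :=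
  expected_product_blockage_general P R C mu hR hC hmu n X hmeas hindep hdist a ha
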